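/- For every integer d ≥ 1, the characteristic polynomial of the bricklayer's graph G_{2^d+1} evaluated at d satisfies χ_{2^d+1}(d) = −d! · ∏_{i=1}^{d−1} (2i)^{binom(d,i) − 1}. -/

import Mathlib

/-- The bricklayer's graph `G_n`: vertices `0, …, n-1`, adjacent iff their binary
expansions differ in exactly one bit (i.e. their XOR is a power of two). -/
def bricklayerGraph (n : ℕ) : SimpleGraph (Fin n) where
  Adj u v := ∃ k : ℕ, (u.val ^^^ v.val) = 2 ^ k
  symm := by
    constructor
    rintro u v ⟨k, h⟩
    exact ⟨k, by rwa [Nat.xor_comm]⟩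
  loopless := by
    constructor
    rintro u ⟨k, h⟩
    rw [Nat.xor_self] at h
    exact (pow_ne_zero k (two_ne_zero)) h.symm

noncomputable instance (n : ℕ) : DecidableRel (bricklayerGraph n).Adj :=
  Classical.decRel _

/-- `λ_n`: the principal (largest) eigenvalue of the adjacency matrix of `G_n` over ℝ. -/
noncomputable def bricklayerLambda (n : ℕ) : ℝ :=
  sSup (spectrum ℝ ((bricklayerGraph n).adjMatrix ℝ))

/-- `χ_n`: the characteristic polynomial `det (x·I - A)` of the adjacency matrix of `G_n`. -/
noncomputable def bricklayerCharpoly (n : ℕ) : Polynomial ℝ :=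
  ((bricklayerGraph n).adjMatrix ℝ).charpoly

/-!
Reading a vertex `k < 2 ^ d` as its set of binary digits, `G_{2^d+1}` is the hypercube on
`Finset (Fin d)` (adjacent iff the symmetric difference is a singleton) with the pendant vertex
`2 ^ d` attached to `∅`. Expanding along the pendant vertex gives
`χ(d) = (d + 1) det X - det (X + e eᵀ)`, where `X = d - A(Q_d)` and `e` is the indicator of `∅`.
The Walsh matrix `W s t = (-1) ^ |s ∩ t|` satisfies `W² = 2 ^ d` and `X W = W diag (2 |t|)`.
The eigenvalue at `t = ∅` vanishes, so `det X = 0` and `det (X + e eᵀ) = 2⁻ᵈ ∏_{t ≠ ∅} 2 |t|`;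
grouping the subsets `t` by size produces the exponents `C(d, i)`.
-/

open Finset Matrix
open scoped symmDiff

namespace Matrix

variable {ι R : Type*} [Fintype ι] [DecidableEq ι] [CommRing R]

theorem det_diagonal_add_vecMulVec_of_eq_zero {a : ι → R} {i₀ : ι} (ha : a i₀ = 0)
    (u v : ι → R) :
    (diagonal a + vecMulVec u v).det = u i₀ * v i₀ * ∏ i ∈ univ.erase i₀, a i := by
  set A := diagonal a + vecMulVec u v
  have hrow : A = A.updateRow i₀ (u i₀ • v) := by
    ext i j
    rcases eq_or_ne i i₀ with rfl | hi
    · by_cases hj : j = i <;> simp [A, diagonal_apply, hj, ha, vecMulVec_apply]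
    · rw [updateRow_ne hi]
  have hops : (A.updateRow i₀ v).det = ((diagonal a).updateRow i₀ v).det := by
    refine det_eq_of_forall_row_eq_smul_add_const (Function.update u i₀ 0) i₀ (by simp)
      fun i j => ?_
    rcases eq_or_ne i i₀ with rfl | hi
    · simp
    · simp [A, hi, vecMulVec_apply]
  rw [hrow, det_updateRow_smul, hops, ← cramer_transpose_apply, diagonal_transpose,
    cramer_eq_adjugate_mulVec, adjugate_diagonal, mulVec_diagonal]
  ring

theorem det_add_vecMulVec_of_mul_eq_mul_diagonal {X P Q : Matrix ι ι R} {a : ι → R}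
    (hQP : Q * P = 1) (hXP : X * P = P * diagonal a) {i₀ : ι} (ha : a i₀ = 0) (u v : ι → R) :
    (X + vecMulVec u v).det = (Q *ᵥ u) i₀ * (v ᵥ* P) i₀ * ∏ i ∈ univ.erase i₀, a i := by
  have hconj : Q * (X + vecMulVec u v) * P = diagonal a + vecMulVec (Q *ᵥ u) (v ᵥ* P) := by
    rw [Matrix.mul_add, Matrix.add_mul, Matrix.mul_assoc, hXP, ← Matrix.mul_assoc, hQP,
      Matrix.one_mul, mul_vecMulVec, vecMulVec_mul]
  have hdet : Q.det * P.det = 1 := by rw [← det_mul, hQP, det_one]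
  rw [← det_diagonal_add_vecMulVec_of_eq_zero ha, ← hconj, det_mul, det_mul,
    mul_comm Q.det, mul_assoc, hdet, mul_one]

/-- Linearity in the last row moves the corner to `-1`, where the Schur complement is
`X + vecMulVec u v`. -/
theorem det_fromBlocks_replicateCol_replicateRow (X : Matrix ι ι R) (u v : ι → R) (δ : R) :
    (fromBlocks X (replicateCol Unit u) (replicateRow Unit v) (of fun _ _ => δ)).det =
      (δ + 1) * X.det - (X + vecMulVec u v).det := by
  set M := fromBlocks X (replicateCol Unit u) (replicateRow Unit v) (-1)
  have hsplit : fromBlocks X (replicateCol Unit u) (replicateRow Unit v) (of fun _ _ => δ) =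
      M.updateRow (Sum.inr ()) (M (Sum.inr ()) + Pi.single (Sum.inr ()) (δ + 1)) := by
    ext (i | i) (j | j) <;> simp [M, updateRow_apply]
  have hcorner : M.updateRow (Sum.inr ()) (Pi.single (Sum.inr ()) (δ + 1)) =
      fromBlocks X (replicateCol Unit u) 0 (of fun _ _ => δ + 1) := by
    ext (i | i) (j | j) <;> simp [M, updateRow_apply]
  let := invertibleOne (α := Matrix Unit Unit R)
  let := invertibleNeg (1 : Matrix Unit Unit R)
  rw [hsplit, det_updateRow_add, updateRow_eq_self, hcorner, det_fromBlocks_zero₂₁,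
    det_fromBlocks₂₂, invOf_neg, invOf_one]
  simp only [det_unique, PUnit.default_eq_unit, neg_apply, one_apply_eq, Matrix.mul_neg,
    Matrix.mul_one, Matrix.neg_mul, sub_neg_eq_add, of_apply, vecMulVec_eq Unit]
  ring

end Matrix

section Hypercube

variable (α : Type*) [DecidableEq α]

def SimpleGraph.hypercube : SimpleGraph (Finset α) where
  Adj s t := #(s ∆ t) = 1
  symm := ⟨fun s t h => by rwa [symmDiff_comm]⟩
  loopless := ⟨fun s h => by simp at h⟩

instance : DecidableRel (SimpleGraph.hypercube α).Adj :=
  fun s t => inferInstanceAs (Decidable (#(s ∆ t) = 1))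

def Matrix.walsh (R : Type*) [CommRing R] : Matrix (Finset α) (Finset α) R :=
  of fun s t => (-1) ^ #(s ∩ t)

variable {α}

namespace SimpleGraph

theorem hypercube_adj {s t : Finset α} : (hypercube α).Adj s t ↔ #(s ∆ t) = 1 := Iff.rfl

theorem hypercube_adj_iff_eq_symmDiff_singleton {s t : Finset α} :
    (hypercube α).Adj s t ↔ ∃ a, t = s ∆ {a} := by
  simp only [hypercube_adj, card_eq_one]
  refine exists_congr fun a => ⟨fun h => ?_, fun h => ?_⟩
  · rw [← h, symmDiff_symmDiff_cancel_left]
  · rw [h, symmDiff_symmDiff_cancel_left]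

theorem hypercube_neighborFinset [Fintype α] (s : Finset α) :
    (hypercube α).neighborFinset s = univ.image fun a => s ∆ {a} := by
  ext t
  simp [hypercube_adj_iff_eq_symmDiff_singleton, eq_comm]

end SimpleGraph

namespace Matrix

variable {R : Type*} [CommRing R]

theorem walsh_apply (s t : Finset α) : walsh α R s t = ∏ i ∈ t, if i ∈ s then -1 else 1 := by
  rw [prod_ite_mem, prod_const, inter_comm]
  rfl

theorem walsh_comm (s t : Finset α) : walsh α R s t = walsh α R t s := by
  simp only [walsh, of_apply, inter_comm]

@[simp]
theorem walsh_empty_left (t : Finset α) : walsh α R ∅ t = 1 := by simp [walsh]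

theorem walsh_symmDiff_singleton (s t : Finset α) (a : α) :
    walsh α R (s ∆ {a}) t = (if a ∈ t then -1 else 1) * walsh α R s t := by
  rw [walsh_apply, walsh_apply, ← prod_ite_eq' t a (fun _ => (-1 : R)), ← prod_mul_distrib]
  refine prod_congr rfl fun i _ => ?_
  by_cases hi : i = a <;> by_cases hs : i ∈ s <;> simp [hi, hs, mem_symmDiff]

variable [Fintype α]

theorem walsh_mul_walsh : walsh α R * walsh α R = (2 ^ Fintype.card α : R) • 1 := by
  ext s t
  have hfactor (i : α) : 1 + (if i ∈ s then -1 else 1) * (if i ∈ t then -1 else 1) =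
      if (i ∈ s ↔ i ∈ t) then (2 : R) else 0 := by
    by_cases hs : i ∈ s <;> by_cases ht : i ∈ t <;> simp [hs, ht] <;> norm_num
  calc (walsh α R * walsh α R) s t
      = ∑ u, ∏ i ∈ u, (if i ∈ s then -1 else 1) * (if i ∈ t then -1 else 1) := by
        simp only [mul_apply, prod_mul_distrib]
        refine sum_congr rfl fun u _ => ?_
        rw [walsh_apply, walsh_comm, walsh_apply]
    _ = ∏ i, if (i ∈ s ↔ i ∈ t) then (2 : R) else 0 := by
        rw [← powerset_univ, ← prod_one_add]
        exact prod_congr rfl fun i _ => hfactor i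
    _ = ((2 ^ Fintype.card α : R) • 1 : Matrix _ _ R) s t := by
        rcases eq_or_ne s t with rfl | hst
        · simp
        · obtain ⟨i, hi⟩ : ∃ i, ¬(i ∈ s ↔ i ∈ t) := by
            by_contra! h
            exact hst (Finset.ext h)
          rw [prod_eq_zero (mem_univ i) (if_neg hi)]
          simp [hst]

theorem hypercube_adjMatrix_mul_walsh :
    (SimpleGraph.hypercube α).adjMatrix R * walsh α R =
      walsh α R * diagonal fun t => (Fintype.card α : R) - 2 * #t := by
  ext s t
  rw [SimpleGraph.adjMatrix_mul_apply, SimpleGraph.hypercube_neighborFinset, mul_diagonal,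
    sum_image fun a _ b _ h => by simpa using h]
  simp_rw [walsh_symmDiff_singleton, ← sum_mul, mul_comm (walsh α R s t)]
  congr 1
  have hsign : ∑ a : α, (if a ∈ t then (-1 : R) else 1) =
      ∑ a : α, (1 - 2 * if a ∈ t then 1 else 0) :=
    sum_congr rfl fun a _ => by split_ifs <;> norm_num
  rw [hsign, sum_sub_distrib, ← mul_sum, sum_boole]
  simp

end Matrix

end Hypercube

theorem Finset.equivBitIndices_xor (a b : ℕ) :
    equivBitIndices (a ^^^ b) = equivBitIndices a ∆ equivBitIndices b := by
  ext i
  simp only [equivBitIndices_apply, List.mem_toFinset, Nat.mem_bitIndices, Nat.testBit_xor,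
    mem_symmDiff]
  cases a.testBit i <;> cases b.testBit i <;> simp

theorem bricklayerGraph_adj_iff {n : ℕ} {u v : Fin n} :
    (bricklayerGraph n).Adj u v ↔ #(equivBitIndices u ∆ equivBitIndices v) = 1 := by
  simp only [card_eq_one, ← equivBitIndices_xor]
  refine exists_congr fun k => ?_
  rw [← equivBitIndices.injective.eq_iff]
  simp

def pendantHypercubeCode (d : ℕ) : Finset (Fin d) ⊕ Unit → ℕ
  | .inl s => ∑ i ∈ s.map Fin.valEmbedding, 2 ^ i
  | .inr _ => 2 ^ d

def pendantHypercubeBits (d : ℕ) : Finset (Fin d) ⊕ Unit → Finset ℕ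
  | .inl s => s.map Fin.valEmbedding
  | .inr _ => {d}

theorem equivBitIndices_pendantHypercubeCode {d : ℕ} (x : Finset (Fin d) ⊕ Unit) :
    equivBitIndices (pendantHypercubeCode d x) = pendantHypercubeBits d x := by
  rcases x with s | _
  · rw [pendantHypercubeCode, equivBitIndices_apply, toFinset_bitIndices_sum_two_pow,
      pendantHypercubeBits]
  · simp [pendantHypercubeCode, pendantHypercubeBits]

theorem pendantHypercubeCode_lt {d : ℕ} (x : Finset (Fin d) ⊕ Unit) :
    pendantHypercubeCode d x < 2 ^ d + 1 := by
  rcases x with s | _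
  · exact Nat.lt_succ_of_lt (Nat.geomSum_lt le_rfl (by simp))
  · exact Nat.lt_succ_self _

theorem pendantHypercubeBits_injective (d : ℕ) : Function.Injective (pendantHypercubeBits d) := by
  have hd (s : Finset (Fin d)) : s.map Fin.valEmbedding ≠ {d} := fun h => by
    obtain ⟨i, -, hi⟩ := mem_map.mp (h ▸ mem_singleton_self d)
    exact i.isLt.ne (by simpa using hi)
  rintro (s | _) (t | _) h <;> simp_all [pendantHypercubeBits, eq_comm]

noncomputable def pendantHypercubeEquiv (d : ℕ) : Finset (Fin d) ⊕ Unit ≃ Fin (2 ^ d + 1) :=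
  Equiv.ofBijective (fun x => ⟨pendantHypercubeCode d x, pendantHypercubeCode_lt x⟩) <| by
    rw [Fintype.bijective_iff_injective_and_card]
    refine ⟨fun x y h => pendantHypercubeBits_injective d ?_, by simp [Fintype.card_finset]⟩
    rw [← equivBitIndices_pendantHypercubeCode, ← equivBitIndices_pendantHypercubeCode]
    exact congrArg (equivBitIndices ∘ Fin.val) h

section

variable {d : ℕ}

theorem pendantHypercubeEquiv_val (x : Finset (Fin d) ⊕ Unit) :
    (pendantHypercubeEquiv d x : ℕ) = pendantHypercubeCode d x := rfl

theorem bricklayerGraph_adj_pendantHypercubeEquiv {x y : Finset (Fin d) ⊕ Unit} :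
    (bricklayerGraph (2 ^ d + 1)).Adj (pendantHypercubeEquiv d x) (pendantHypercubeEquiv d y) ↔
      #(pendantHypercubeBits d x ∆ pendantHypercubeBits d y) = 1 := by
  rw [bricklayerGraph_adj_iff, pendantHypercubeEquiv_val, pendantHypercubeEquiv_val,
    equivBitIndices_pendantHypercubeCode, equivBitIndices_pendantHypercubeCode]

theorem map_symmDiff_valEmbedding (s t : Finset (Fin d)) :
    (s ∆ t).map Fin.valEmbedding = s.map Fin.valEmbedding ∆ t.map Fin.valEmbedding := by
  simp only [map_eq_image, image_symmDiff _ _ Fin.valEmbedding.injective]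

theorem submatrix_pendantHypercubeEquiv_adjMatrix (R : Type*) [CommRing R] :
    ((bricklayerGraph (2 ^ d + 1)).adjMatrix R).submatrix (pendantHypercubeEquiv d)
        (pendantHypercubeEquiv d) =
      fromBlocks ((SimpleGraph.hypercube (Fin d)).adjMatrix R) (replicateCol Unit (Pi.single ∅ 1))
        (replicateRow Unit (Pi.single ∅ 1)) 0 := by
  have hpendant (s : Finset (Fin d)) : #(s.map Fin.valEmbedding ∆ {d}) = 1 ↔ s = ∅ := by
    have hdisj : Disjoint (s.map Fin.valEmbedding) {d} :=
      disjoint_singleton_right.mpr (by simpa using fun i _ => i.isLt.ne)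
    rw [symmDiff_eq_union hdisj, card_union_of_disjoint hdisj]
    simp
  ext (s | _) (t | _) <;>
    simp [SimpleGraph.adjMatrix_apply, bricklayerGraph_adj_pendantHypercubeEquiv,
      pendantHypercubeBits, ← map_symmDiff_valEmbedding, SimpleGraph.hypercube_adj, hpendant,
      symmDiff_comm {d}, Pi.single_apply]

end

theorem prod_erase_empty_comp_card {α M : Type*} [Fintype α] [DecidableEq α] [CommMonoid M]
    (f : ℕ → M) :
    ∏ t ∈ (univ : Finset (Finset α)).erase ∅, f #t =
      ∏ j ∈ Icc 1 (Fintype.card α), f j ^ (Fintype.card α).choose j := by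
  have hmaps : ∀ t ∈ (univ : Finset (Finset α)).erase ∅, #t ∈ Icc 1 (Fintype.card α) :=
    fun t ht => mem_Icc.mpr ⟨card_pos.mpr (nonempty_iff_ne_empty.mpr (ne_of_mem_erase ht)),
      card_le_univ t⟩
  rw [← prod_fiberwise_of_maps_to hmaps]
  refine prod_congr rfl fun j hj => ?_
  have hfiber : ((univ : Finset (Finset α)).erase ∅).filter (#· = j) = powersetCard j univ := by
    ext t
    simp only [mem_filter, mem_erase, mem_univ, and_true, mem_powersetCard, subset_univ,
      true_and, and_iff_right_iff_imp]
    rintro rfl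
    exact nonempty_iff_ne_empty.mp (card_pos.mp (mem_Icc.mp hj).1)
  rw [hfiber, prod_congr rfl fun t ht => by rw [(mem_powersetCard.mp ht).2], prod_const,
    card_powersetCard, card_univ]

theorem prod_Icc_two_mul_pow_choose (d : ℕ) :
    ∏ j ∈ Icc 1 d, (2 * j : ℝ) ^ d.choose j =
      2 ^ d * d.factorial * ∏ j ∈ Icc 1 (d - 1), (2 * j : ℝ) ^ (d.choose j - 1) := by
  have hsplit : ∀ j ∈ Icc 1 d, (2 * j : ℝ) ^ d.choose j = 2 * j * (2 * j) ^ (d.choose j - 1) :=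
    fun j hj => by
      rw [← pow_succ', Nat.sub_add_cancel (Nat.choose_pos (mem_Icc.mp hj).2)]
  have hfactorial : ∏ j ∈ Icc 1 d, (2 * j : ℝ) = 2 ^ d * d.factorial := by
    rw [prod_mul_distrib, prod_const, Nat.card_Icc, Nat.add_sub_cancel, ← Nat.cast_prod,
      ← Ico_add_one_right_eq_Icc, prod_Ico_id_eq_factorial]
  have htop : ∏ j ∈ Icc 1 (d - 1), (2 * j : ℝ) ^ (d.choose j - 1) =
      ∏ j ∈ Icc 1 d, (2 * j : ℝ) ^ (d.choose j - 1) := by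
    refine prod_subset (Icc_subset_Icc_right (Nat.sub_le d 1)) fun j hj hj' => ?_
    have : j = d := by simp only [mem_Icc] at hj hj'; omega
    simp [this]
  rw [prod_congr rfl hsplit, prod_mul_distrib, hfactorial, htop]

theorem bricklayerCharpoly_eval_eq (d : ℕ) :
    (bricklayerCharpoly (2 ^ d + 1)).eval (d : ℝ) =
      -(2 ^ d)⁻¹ * ∏ t ∈ (univ : Finset (Finset (Fin d))).erase ∅, (2 * #t : ℝ) := by
  set X := scalar (Finset (Fin d)) (d : ℝ) - (SimpleGraph.hypercube (Fin d)).adjMatrix ℝ with hX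
  set v : Finset (Fin d) → ℝ := -Pi.single ∅ 1
  have hblocks : (scalar _ (d : ℝ) - (bricklayerGraph (2 ^ d + 1)).adjMatrix ℝ).submatrix
      (pendantHypercubeEquiv d) (pendantHypercubeEquiv d) =
      fromBlocks X (replicateCol Unit v) (replicateRow Unit v) (of fun _ _ => (d : ℝ)) := by
    simp only [submatrix_sub, Pi.sub_apply, submatrix_pendantHypercubeEquiv_adjMatrix,
      scalar_apply, submatrix_diagonal_equiv]
    ext (s | _) (t | _) <;> simp [X, v, diagonal_apply, Matrix.natCast_apply]
  have hinv : ((2 : ℝ) ^ d)⁻¹ • walsh (Fin d) ℝ * walsh (Fin d) ℝ = 1 := by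
    rw [smul_mul, walsh_mul_walsh, Fintype.card_fin, smul_smul, inv_mul_cancel₀ (by positivity),
      one_smul]
  have heigen : X * walsh (Fin d) ℝ = walsh (Fin d) ℝ * diagonal fun t => 2 * (#t : ℝ) := by
    rw [hX, sub_mul, hypercube_adjMatrix_mul_walsh, Fintype.card_fin, scalar_apply]
    ext s t
    simp only [Matrix.sub_apply, diagonal_mul, mul_diagonal]
    ring
  have hdet := det_add_vecMulVec_of_mul_eq_mul_diagonal hinv heigen (i₀ := ∅) (by simp)
  have hXdet : X.det = 0 := by simpa using hdet 0 0
  rw [bricklayerCharpoly, eval_charpoly, ← det_submatrix_equiv_self (pendantHypercubeEquiv d),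
    hblocks, det_fromBlocks_replicateCol_replicateRow, hXdet, hdet]
  simp [v, mulVec_neg, neg_vecMul]

theorem bricklayer_charpoly_add_one_eval_general (d : ℕ) :
    (bricklayerCharpoly (2 ^ d + 1)).eval (d : ℝ) =
      -(d.factorial : ℝ) *
        ∏ i ∈ Finset.Icc 1 (d - 1), ((2 * i : ℝ)) ^ (d.choose i - 1) := by
  rw [bricklayerCharpoly_eval_eq, prod_erase_empty_comp_card (fun j : ℕ => (2 * j : ℝ)),
    Fintype.card_fin, prod_Icc_two_mul_pow_choose]
  field_simp

/-- `χ_{2^d + 1}(d) = -d! · ∏_{i=1}^{d-1} (2i)^{C(d,i) - 1}`. -/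
theorem bricklayer_charpoly_add_one_eval (d : ℕ) (hd : 1 ≤ d) :
    (bricklayerCharpoly (2 ^ d + 1)).eval (d : ℝ) =
      -(d.factorial : ℝ) *
        ∏ i ∈ Finset.Icc 1 (d - 1), ((2 * i : ℝ)) ^ (d.choose i - 1) :=
  bricklayer_charpoly_add_one_eval_general d
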